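/- arXiv:1906.07410 — 2 statements merged into one kernel-verified Lean document; each statement's English description precedes it below -/
import Mathlib

section
/- The total number cpt(n) of parts in all partitions of n into consecutive positive integers satisfies the generating function identity Σ_{n≥1} cpt(n) q^n = Σ_{n≥1} n·q^{n(n+1)/2} / (1 − q^n), valid as an identity of formal power series (equivalently for |q| < 1). -/
open Finset

/-- `cpt n` is the total number of parts in all partitions of `n` into consecutive
positive integers: each representation `n = a + (a+1) + ⋯ + (a+k−1)`, i.e.
`n = k·a + k(k−1)/2` with `a, k ≥ 1`, contributes `k` parts. -/
def cpt (n : ℕ) : ℕ :=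
  ∑ p ∈ ((Finset.range (n + 1) ×ˢ Finset.range (n + 1)).filter
      (fun p => 1 ≤ p.1 ∧ 1 ≤ p.2 ∧ p.1 * p.2 + p.1 * (p.1 - 1) / 2 = n)), p.1

/-- `∑_{n≥1} cpt(n) qⁿ = ∑_{n≥1} n·q^{n(n+1)/2}/(1 − qⁿ)` for `|q| < 1`. -/
theorem cpt_generating_function (q : ℂ) (hq : ‖q‖ < 1) :
    ∑' n : ℕ, (cpt (n + 1) : ℂ) * q ^ (n + 1)
      = ∑' n : ℕ, ((n + 1 : ℕ) : ℂ) * q ^ ((n + 1) * (n + 2) / 2) / (1 - q ^ (n + 1)) := by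
  have hr0 : (0:ℝ) ≤ ‖q‖ := norm_nonneg q
  set f : ℕ × ℕ → ℂ := fun p =>
    ((p.1 + 1 : ℕ) : ℂ) * q ^ ((p.1 + 1) * (p.2 + 1) + (p.1 + 1) * p.1 / 2) with hfdef
  -- summability of the double series
  have hF : Summable (fun p : ℕ × ℕ => ((p.1 + 1 : ℝ)) * ‖q‖ ^ p.1 * ‖q‖ ^ p.2) := by
    have h1 : Summable (fun k : ℕ => (k + 1 : ℝ) * ‖q‖ ^ k) := by
      have ha := summable_pow_mul_geometric_of_norm_lt_one (R := ℝ) 1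
        (by rwa [Real.norm_eq_abs, abs_of_nonneg hr0])
      have hb := summable_geometric_of_lt_one hr0 hq
      simpa [add_mul, pow_one] using ha.add hb
    have h2 : Summable (fun j : ℕ => ‖q‖ ^ j) := summable_geometric_of_lt_one hr0 hq
    exact h1.mul_of_nonneg h2 (fun k => by positivity) (fun j => by positivity)
  have hf : Summable f := by
    apply Summable.of_norm_bounded hF
    intro p
    have hexp : p.1 + p.2 ≤ (p.1 + 1) * (p.2 + 1) + (p.1 + 1) * p.1 / 2 := by
      have h : (p.1 + 1) * (p.2 + 1) = p.1 * p.2 + p.1 + p.2 + 1 := by ring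
      omega
    calc ‖f p‖ = (p.1 + 1 : ℝ) * ‖q‖ ^ ((p.1 + 1) * (p.2 + 1) + (p.1 + 1) * p.1 / 2) := by
          simp only [hfdef, norm_mul, norm_pow, Complex.norm_natCast]
          push_cast
          ring
      _ ≤ (p.1 + 1 : ℝ) * ‖q‖ ^ (p.1 + p.2) :=
          mul_le_mul_of_nonneg_left (pow_le_pow_of_le_one hr0 hq.le hexp) (by positivity)
      _ = (p.1 + 1 : ℝ) * ‖q‖ ^ p.1 * ‖q‖ ^ p.2 := by rw [pow_add, mul_assoc]
  -- RHS equals the double sum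
  have hRHS : ∑' n : ℕ, ((n + 1 : ℕ) : ℂ) * q ^ ((n + 1) * (n + 2) / 2) / (1 - q ^ (n + 1))
      = ∑' p : ℕ × ℕ, f p := by
    rw [Summable.tsum_prod hf]
    apply tsum_congr
    intro k
    have hqk : ‖q ^ (k + 1)‖ < 1 := by
      rw [norm_pow]; exact pow_lt_one₀ hr0 hq (Nat.succ_ne_zero k)
    rw [div_eq_mul_inv, ← tsum_geometric_of_norm_lt_one hqk, ← tsum_mul_left]
    apply tsum_congr
    intro j
    have key : (k+1)*(k+2)/2 + (k+1)*j = (k+1)*(j+1) + (k+1)*k/2 := by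
      have ha : (k+1)*k % 2 = 0 := by
        rw [mul_comm]; exact Nat.even_iff.mp (Nat.even_mul_succ_self k)
      have hb : (k+1)*(k+2) = (k+1)*k + 2*(k+1) := by ring
      have hc : (k+1)*(j+1) = (k+1)*j + (k+1) := by ring
      omega
    simp only [hfdef]
    rw [mul_assoc, ← pow_mul, ← pow_add, key]
  -- LHS equals the double sum, via summation over fibers
  have hLHS : ∑' n : ℕ, (cpt (n + 1) : ℂ) * q ^ (n + 1) = ∑' p : ℕ × ℕ, f p := by
    set g : ℕ × ℕ → ℕ := fun p => (p.1 + 1) * (p.2 + 1) + (p.1 + 1) * p.1 / 2 - 1 with hgdef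
    rw [← (hf.hasSum.tsum_fiberwise g).tsum_eq]
    apply tsum_congr
    intro n
    -- the fiber as a finset
    set T : Finset (ℕ × ℕ) := (Finset.range (n + 2) ×ˢ Finset.range (n + 2)).filter
      (fun p => (p.1 + 1) * (p.2 + 1) + (p.1 + 1) * p.1 / 2 = n + 1) with hTdef
    have hset : g ⁻¹' {n} = (T : Set (ℕ × ℕ)) := by
      ext p
      simp only [Set.mem_preimage, Set.mem_singleton_iff, hgdef, hTdef, Finset.coe_filter,
        Set.mem_setOf_eq, Finset.mem_product, Finset.mem_range]
      have h1 : p.1 + 1 ≤ (p.1 + 1) * (p.2 + 1) := Nat.le_mul_of_pos_right _ (Nat.succ_pos _)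
      have h2 : p.2 + 1 ≤ (p.1 + 1) * (p.2 + 1) := Nat.le_mul_of_pos_left _ (Nat.succ_pos _)
      omega
    rw [hset, Finset.tsum_subtype' T f]
    have hsum : ∑ p ∈ T, f p = ∑ p ∈ T, ((p.1 + 1 : ℕ) : ℂ) * q ^ (n + 1) := by
      apply Finset.sum_congr rfl
      intro p hp
      rw [hTdef, Finset.mem_filter] at hp
      simp only [hfdef]
      rw [hp.2]
    rw [hsum, ← Finset.sum_mul]
    congr 1
    rw [cpt]
    have hS : ∑ p ∈ ((Finset.range (n + 1 + 1) ×ˢ Finset.range (n + 1 + 1)).filter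
        (fun p => 1 ≤ p.1 ∧ 1 ≤ p.2 ∧ p.1 * p.2 + p.1 * (p.1 - 1) / 2 = n + 1)), p.1
        = ∑ x ∈ T, (x.1 + 1) := by
      apply Finset.sum_nbij' (fun p => (p.1 - 1, p.2 - 1)) (fun p => (p.1 + 1, p.2 + 1))
      · intro p hp
        simp only [Finset.mem_filter, Finset.mem_product, Finset.mem_range] at hp
        obtain ⟨⟨hp1, hp2⟩, h1, h2, hcond⟩ := hp
        rw [hTdef, Finset.mem_filter, Finset.mem_product, Finset.mem_range, Finset.mem_range]
        have e1 : p.1 - 1 + 1 = p.1 := Nat.succ_pred_eq_of_pos h1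
        have e2 : p.2 - 1 + 1 = p.2 := Nat.succ_pred_eq_of_pos h2
        refine ⟨⟨by omega, by omega⟩, ?_⟩
        rw [e1, e2]
        exact hcond
      · intro p hp
        rw [hTdef, Finset.mem_filter, Finset.mem_product, Finset.mem_range, Finset.mem_range] at hp
        obtain ⟨⟨hp1, hp2⟩, hcond⟩ := hp
        simp only [Finset.mem_filter, Finset.mem_product, Finset.mem_range]
        have h1 : p.1 + 1 ≤ (p.1 + 1) * (p.2 + 1) := Nat.le_mul_of_pos_right _ (Nat.succ_pos _)
        have h2 : p.2 + 1 ≤ (p.1 + 1) * (p.2 + 1) := Nat.le_mul_of_pos_left _ (Nat.succ_pos _)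
        refine ⟨⟨by omega, by omega⟩, by omega, by omega, ?_⟩
        simpa using hcond
      · intro p hp
        simp only [Finset.mem_filter, Finset.mem_product, Finset.mem_range] at hp
        obtain ⟨⟨hp1, hp2⟩, h1, h2, hcond⟩ := hp
        ext <;> simp <;> omega
      · intro p hp
        simp
      · intro p hp
        simp only [Finset.mem_filter, Finset.mem_product, Finset.mem_range] at hp
        omega
    exact_mod_cast congrArg (Nat.cast : ℕ → ℂ) hS
  rw [hLHS, hRHS]
end

section
/- For n ≥ 1, the number of odd divisors of n equals the number of representations of n as a sum of consecutive positive integers (i.e., as a + (a+1) + ⋯ + (a+k−1) with a, k ≥ 1). -/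
open Finset

private lemma aux_two_mul (k a : ℕ) (hk : 1 ≤ k) :
    k * (2 * a + k - 1) = 2 * (k * a + k * (k - 1) / 2) := by
  obtain ⟨j, rfl⟩ : ∃ j, k = j + 1 := ⟨k - 1, by omega⟩
  obtain ⟨c, hc⟩ := Nat.even_mul_succ_self j
  have hc' : (j + 1) * j = c + c := by rw [mul_comm]; exact hc
  have h1 : (j + 1) * ((j + 1) - 1) / 2 = c := by
    simp only [Nat.add_sub_cancel]; rw [hc']; omega
  rw [h1]
  have h3 : 2 * a + (j + 1) - 1 = 2 * a + j := by omega
  rw [h3]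
  have h2 : (j + 1) * (2 * a + j) = 2 * ((j + 1) * a) + (j + 1) * j := by ring
  rw [h2, hc']
  ring

private lemma repr_of_factor (n k b : ℕ) (hn : 0 < n) (h : k * b = 2 * n) (hkb : k < b)
    (hpar : Odd (k + b)) :
    1 ≤ k ∧ 1 ≤ (b + 1 - k) / 2 ∧ k * ((b + 1 - k) / 2) + k * (k - 1) / 2 = n ∧
      k ≤ n ∧ (b + 1 - k) / 2 ≤ n := by
  have hk : 1 ≤ k := by
    rcases Nat.eq_zero_or_pos k with rfl | h1
    · rw [zero_mul] at h; omega
    · exact h1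
  obtain ⟨c, hcpar⟩ := hpar
  have h2a : 2 * ((b + 1 - k) / 2) = b + 1 - k := by omega
  have ha : 1 ≤ (b + 1 - k) / 2 := by omega
  have key : k * ((b + 1 - k) / 2) + k * (k - 1) / 2 = n := by
    have := aux_two_mul k ((b + 1 - k) / 2) hk
    have hb : 2 * ((b + 1 - k) / 2) + k - 1 = b := by omega
    rw [hb] at this
    rw [h] at this
    omega
  have hkn : k ≤ n := by
    have : k * 2 ≤ k * b := Nat.mul_le_mul_left k (by omega)
    omega
  have han : (b + 1 - k) / 2 ≤ n := by
    have : b ≤ k * b := Nat.le_mul_of_pos_left b hk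
    omega
  exact ⟨hk, ha, key, hkn, han⟩

private lemma odd_dvd_of_dvd_two_mul {d n : ℕ} (hd : Odd d) (h : d ∣ 2 * n) : d ∣ n := by
  have hcop : Nat.Coprime d 2 := by
    exact hd.coprime_two_right
  exact hcop.dvd_of_dvd_mul_left h

/-- For `n ≥ 1`, the number of odd divisors of `n` equals the number of
representations of `n` as a sum of consecutive positive integers
`n = a + (a+1) + ⋯ + (a+k−1) = k·a + k(k−1)/2` with `a, k ≥ 1`. -/
theorem card_odd_divisors_eq_card_consecutive_representations (n : ℕ) (hn : 0 < n) :
    (n.divisors.filter (fun d => Odd d)).card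
      = ((Finset.range (n + 1) ×ˢ Finset.range (n + 1)).filter
          (fun p => 1 ≤ p.1 ∧ 1 ≤ p.2 ∧ p.1 * p.2 + p.1 * (p.1 - 1) / 2 = n)).card := by
  apply Finset.card_nbij'
    (fun d => (min d (2 * n / d), (max d (2 * n / d) + 1 - min d (2 * n / d)) / 2))
    (fun p => if Odd p.1 then p.1 else 2 * p.2 + p.1 - 1)
  · -- maps into target
    intro d hd
    simp only [Finset.mem_coe, mem_filter, Nat.mem_divisors] at hd
    obtain ⟨⟨hdvd, hn0⟩, hodd⟩ := hd
    set e := 2 * n / d with he_def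
    have he : d * e = 2 * n := Nat.mul_div_cancel' (hdvd.mul_left 2)
    have hd1 : 1 ≤ d := Nat.pos_of_dvd_of_pos hdvd hn
    have heven : Even e := by
      have h2 : Even (d * e) := by rw [he]; exact even_two_mul n
      rcases Nat.even_mul.mp h2 with h | h
      · exact absurd h (Nat.not_even_iff_odd.mpr hodd)
      · exact h
    have hne : d ≠ e := by
      intro hEq; rw [← hEq] at heven; exact (Nat.not_even_iff_odd.mpr hodd) heven
    simp only [Finset.mem_coe, mem_filter, mem_product, mem_range]
    rcases lt_or_gt_of_ne hne with hlt | hlt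
    · rw [min_eq_left hlt.le, max_eq_right hlt.le]
      obtain ⟨h1, h2, h3, h4, h5⟩ := repr_of_factor n d e hn he hlt (hodd.add_even heven)
      exact ⟨⟨by omega, by omega⟩, h1, h2, h3⟩
    · rw [min_eq_right hlt.le, max_eq_left hlt.le]
      have he' : e * d = 2 * n := by rw [mul_comm]; exact he
      obtain ⟨h1, h2, h3, h4, h5⟩ := repr_of_factor n e d hn he' hlt (heven.add_odd hodd)
      exact ⟨⟨by omega, by omega⟩, h1, h2, h3⟩
  · -- inverse maps into source
    intro p hp
    simp only [Finset.mem_coe, mem_filter, mem_product, mem_range] at hp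
    obtain ⟨⟨hk1, ha1⟩, hk, ha, heq⟩ := hp
    have key : p.1 * (2 * p.2 + p.1 - 1) = 2 * n := by
      rw [aux_two_mul p.1 p.2 hk, heq]
    simp only [Finset.mem_coe, mem_filter, Nat.mem_divisors]
    by_cases hodd : Odd p.1
    · rw [if_pos hodd]
      refine ⟨⟨odd_dvd_of_dvd_two_mul hodd ⟨_, key.symm⟩, by omega⟩, hodd⟩
    · rw [if_neg hodd]
      have hkeven : Even p.1 := Nat.not_odd_iff_even.mp hodd
      obtain ⟨c, hc⟩ := hkeven
      have hbodd : Odd (2 * p.2 + p.1 - 1) := by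
        refine ⟨p.2 + c - 1, by omega⟩
      have hdvd : (2 * p.2 + p.1 - 1) ∣ 2 * n := by
        refine ⟨p.1, ?_⟩
        rw [← key]; ring
      exact ⟨⟨odd_dvd_of_dvd_two_mul hbodd hdvd, by omega⟩, hbodd⟩
  · -- left inverse
    intro d hd
    beta_reduce
    simp only [Finset.mem_coe, mem_filter, Nat.mem_divisors] at hd
    obtain ⟨⟨hdvd, hn0⟩, hodd⟩ := hd
    set e := 2 * n / d with he_def
    have he : d * e = 2 * n := Nat.mul_div_cancel' (hdvd.mul_left 2)
    have hd1 : 1 ≤ d := Nat.pos_of_dvd_of_pos hdvd hn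
    have heven : Even e := by
      have h2 : Even (d * e) := by rw [he]; exact even_two_mul n
      rcases Nat.even_mul.mp h2 with h | h
      · exact absurd h (Nat.not_even_iff_odd.mpr hodd)
      · exact h
    have hne : d ≠ e := by
      intro hEq; rw [← hEq] at heven; exact (Nat.not_even_iff_odd.mpr hodd) heven
    rcases lt_or_gt_of_ne hne with hlt | hlt
    · simp only [min_eq_left hlt.le, max_eq_right hlt.le]
      rw [if_pos hodd]
    · simp only [min_eq_right hlt.le, max_eq_left hlt.le]
      have hne2 : ¬ Odd e := by
        rw [← Nat.not_even_iff_odd]; exact fun h => h heven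
      rw [if_neg hne2]
      obtain ⟨x, hx⟩ := hodd
      obtain ⟨y, hy⟩ := heven
      omega
  · -- right inverse
    intro p hp
    beta_reduce
    simp only [Finset.mem_coe, mem_filter, mem_product, mem_range] at hp
    obtain ⟨⟨hk1, ha1⟩, hk, ha, heq⟩ := hp
    have key : p.1 * (2 * p.2 + p.1 - 1) = 2 * n := by
      rw [aux_two_mul p.1 p.2 hk, heq]
    have hblt : p.1 < 2 * p.2 + p.1 - 1 := by omega
    by_cases hodd : Odd p.1
    · rw [if_pos hodd]
      have hediv : 2 * n / p.1 = 2 * p.2 + p.1 - 1 := by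
        rw [← key]; exact Nat.mul_div_cancel_left _ (by omega)
      rw [hediv, min_eq_left hblt.le, max_eq_right hblt.le]
      have : p.1 ≠ 0 := by omega
      refine Prod.ext rfl ?_
      simp only
      omega
    · rw [if_neg hodd]
      have hediv : 2 * n / (2 * p.2 + p.1 - 1) = p.1 := by
        rw [← key, mul_comm]; exact Nat.mul_div_cancel_left _ (by omega)
      rw [hediv, min_eq_right hblt.le, max_eq_left hblt.le]
      refine Prod.ext rfl ?_
      simp only
      omega
end
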